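/- arXiv:1702.02604 — 4 statements merged into one kernel-verified Lean document; each statement's English description precedes it below -/
import Mathlib

section
/- Consider the fixed-design linear model y = Xβ + e with X ∈ ℝ^{n×2}, orthonormal design XᵀX = n·I₂, β = (β₁,β₂), and noise e ∈ ℝⁿ with law ⨂ⁿ N(0, γ²), γ > 0. Fix a detector error ε ∈ [0,1] and λ ≥ 0, and let β̂_{C,λ} = (XᵀX + nλD_C)⁻¹Xᵀy with D_C = diag(ε, 1−ε) be the L₂-norm causally regularized estimate. Then the causality accuracy C(β̂_{C,λ}) = P[(β̂_{C,λ})₁ > (β̂_{C,λ})₂] satisfies C(β̂_{C,λ}) = Φ( (√n/γ) · ((1+λ(1−ε))β₁ − (1+λε)β₂) / √((1+λε)² + (1+λ(1−ε))²) ), where Φ is the standard Gaussian CDF and the probability is taken over the noise measure ⨂ⁿ N(0, γ²). -/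
open MeasureTheory ProbabilityTheory Matrix Finset

/-- The cumulative distribution function `Φ` of the standard Gaussian
measure `N(0,1)`. -/
noncomputable def stdGaussianCDF (t : ℝ) : ℝ :=
  ((gaussianReal 0 1) (Set.Iic t)).toReal

/-!
With an orthonormal design the penalised normal matrix is diagonal, `n • diag(a, b)` with
`a = 1 + λε` and `b = 1 + λ(1 - ε)`, so `β̂₁ > β̂₂` is the half-space event
`n (a β₂ - b β₁) < ⟪c, e⟫` for `c = X (b, -a)`. For i.i.d. `N(0, γ²)` noise, `⟪c, e⟫` is
`N(0, ‖c‖² γ²)` (compare characteristic functions), orthonormality gives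
`‖c‖² = n (a² + b²)`, and standardising turns the probability of the half-space into `Φ`.
-/

open scoped NNReal

lemma map_pi_gaussianReal_sum_mul {ι : Type*} [Fintype ι] (m : ι → ℝ) (v : ι → ℝ≥0)
    (c : ι → ℝ) :
    (Measure.pi fun i => gaussianReal (m i) (v i)).map (fun e => ∑ i, c i * e i)
      = gaussianReal (∑ i, c i * m i) (∑ i, (c i ^ 2).toNNReal * v i) := by
  refine Measure.ext_of_charFun (funext fun s => ?_)
  have hmeas : Measurable fun e : ι → ℝ => ∑ i, c i * e i :=
    Finset.measurable_sum _ fun i _ => (measurable_pi_apply i).const_mul _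
  rw [charFun_apply_real, integral_map hmeas.aemeasurable (by fun_prop), charFun_gaussianReal]
  calc ∫ e, Complex.exp (s * ↑(∑ i, c i * e i) * Complex.I) ∂Measure.pi _
      = ∫ e, ∏ i, Complex.exp (↑(s * c i) * ↑(e i : ℝ) * Complex.I)
          ∂Measure.pi fun i => gaussianReal (m i) (v i) := by
        simp_rw [← Complex.exp_sum]
        push_cast
        simp_rw [Finset.mul_sum, Finset.sum_mul, mul_assoc]
    _ = ∏ i, charFun (gaussianReal (m i) (v i)) (s * c i) := by
        simp_rw [integral_fintype_prod_eq_prod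
          (fun i (x : ℝ) => Complex.exp (↑(s * c i) * x * Complex.I)), charFun_apply_real]
    _ = _ := by
        simp_rw [charFun_gaussianReal, ← Complex.exp_sum]
        congr 1
        push_cast [Real.coe_toNNReal _ (sq_nonneg _), mul_sum, sum_mul, sum_div, ← sum_sub_distrib]
        exact Finset.sum_congr rfl fun i _ => by ring

lemma gaussianReal_map_standardize {μ : ℝ} {v : ℝ≥0} (hv : v ≠ 0) :
    (gaussianReal μ v).map (fun x => (μ - x) / √v) = gaussianReal 0 1 := by
  have hcomp : (fun x => (μ - x) / √v) = (· / √(v : ℝ)) ∘ (μ - ·) := rfl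
  rw [hcomp, ← Measure.map_map (by fun_prop) (by fun_prop), gaussianReal_map_const_sub,
    gaussianReal_map_div_const, sub_self, zero_div]
  congr 1
  ext
  simp [Real.sq_sqrt v.coe_nonneg, hv]

lemma gaussianReal_Ioi_toReal {v : ℝ≥0} (hv : v ≠ 0) (μ t : ℝ) :
    (gaussianReal μ v (Set.Ioi t)).toReal = stdGaussianCDF ((μ - t) / √v) := by
  have hsqrt : 0 < √(v : ℝ) := Real.sqrt_pos.2 (by positivity)
  have hpre : (fun x => (μ - x) / √v) ⁻¹' Set.Iic ((μ - t) / √v) = Set.Ici t := by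
    ext x
    simp only [Set.mem_preimage, Set.mem_Iic, Set.mem_Ici, div_le_div_iff_of_pos_right hsqrt]
    constructor <;> intro h <;> linarith
  rw [stdGaussianCDF, ← gaussianReal_map_standardize (μ := μ) hv,
    Measure.map_apply (by fun_prop) measurableSet_Iic, hpre,
    measure_congr (Ioi_ae_eq_Ici' (gaussianReal_absolutelyContinuous μ hv Real.volume_singleton))]

lemma measure_lt_dotProduct_pi_gaussianReal {ι : Type*} [Fintype ι] {v : ℝ≥0} (hv : v ≠ 0)
    {c : ι → ℝ} (hc : c ≠ 0) (t : ℝ) :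
    ((Measure.pi fun _ : ι => gaussianReal 0 v) {e | t < c ⬝ᵥ e}).toReal
      = stdGaussianCDF (-t / (√(c ⬝ᵥ c) * √v)) := by
  have hmeas : Measurable fun e : ι → ℝ => ∑ i, c i * e i :=
    Finset.measurable_sum _ fun i _ => (measurable_pi_apply i).const_mul _
  have hlaw := map_pi_gaussianReal_sum_mul (fun _ : ι => 0) (fun _ => v) c
  simp only [mul_zero, Finset.sum_const_zero, ← Finset.sum_mul] at hlaw
  set V : ℝ≥0 := (∑ i, (c i ^ 2).toNNReal) * v with hV
  have hVc : (V : ℝ) = (c ⬝ᵥ c) * v := by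
    simp [hV, dotProduct, sq, Real.coe_toNNReal _ (mul_self_nonneg _)]
  have hV0 : V ≠ 0 := by
    rw [← NNReal.coe_ne_zero, hVc]
    exact mul_ne_zero (dotProduct_self_eq_zero.not.2 hc) (NNReal.coe_ne_zero.2 hv)
  change ((Measure.pi _) ((fun e => ∑ i, c i * e i) ⁻¹' Set.Ioi t)).toReal = _
  rw [← Measure.map_apply hmeas measurableSet_Ioi, hlaw, gaussianReal_Ioi_toReal hV0, hVc,
    Real.sqrt_mul' _ v.coe_nonneg, zero_sub]

section OrthogonalDesign

variable {m ι : Type*} [Fintype m] {X : Matrix m ι ℝ} {s : ℝ}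

lemma transpose_mulVec_dotProduct [Fintype ι] (w : ι → ℝ) (e : m → ℝ) :
    Xᵀ *ᵥ e ⬝ᵥ w = X *ᵥ w ⬝ᵥ e := by
  rw [mulVec_transpose, ← dotProduct_mulVec, dotProduct_comm]

lemma mulVec_dotProduct_mulVec_self [Fintype ι] [DecidableEq ι] (hX : Xᵀ * X = s • 1)
    (w : ι → ℝ) : X *ᵥ w ⬝ᵥ X *ᵥ w = s * (w ⬝ᵥ w) := by
  rw [dotProduct_mulVec, ← mulVec_transpose, mulVec_mulVec, hX, smul_mulVec, one_mulVec,
    smul_dotProduct, smul_eq_mul]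

lemma transpose_mul_self_add_smul_diagonal [DecidableEq ι] (hX : Xᵀ * X = s • 1) (d : ι → ℝ) :
    Xᵀ * X + s • diagonal d = diagonal fun i => s * (1 + d i) := by
  rw [hX, ← diagonal_one, ← diagonal_smul, ← diagonal_smul, diagonal_add]
  congr 1
  ext i
  simp only [Pi.smul_apply, smul_eq_mul]
  ring

lemma inv_diagonal_of_ne_zero [Fintype ι] [DecidableEq ι] {w : ι → ℝ} (hw : ∀ i, w i ≠ 0) :
    (diagonal w)⁻¹ = diagonal fun i => (w i)⁻¹ := by
  refine inv_eq_left_inv ?_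
  rw [diagonal_mul_diagonal, ← diagonal_one]
  exact congrArg diagonal (funext fun i => inv_mul_cancel₀ (hw i))

lemma ridge_estimate_apply [Fintype ι] [DecidableEq ι] (hX : Xᵀ * X = s • 1) (hs : s ≠ 0)
    {d : ι → ℝ} (hd : ∀ i, 1 + d i ≠ 0) (β : ι → ℝ) (e : m → ℝ) (i : ι) :
    ((Xᵀ * X + s • diagonal d)⁻¹ *ᵥ (Xᵀ *ᵥ (X *ᵥ β + e))) i
      = (s * β i + (Xᵀ *ᵥ e) i) / (s * (1 + d i)) := by
  rw [transpose_mul_self_add_smul_diagonal hX, inv_diagonal_of_ne_zero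
    fun i => mul_ne_zero hs (hd i), mulVec_diagonal, mulVec_add,
    mulVec_mulVec, hX, smul_mulVec, one_mulVec, div_eq_inv_mul]
  rfl

end OrthogonalDesign

lemma ridge_estimate_one_lt_zero_iff {m : Type*} [Fintype m] {X : Matrix m (Fin 2) ℝ} {s : ℝ}
    (hX : Xᵀ * X = s • 1) (hs : 0 < s) {d : Fin 2 → ℝ} (hd : ∀ i, 0 < 1 + d i)
    (β : Fin 2 → ℝ) (e : m → ℝ) :
    ((Xᵀ * X + s • diagonal d)⁻¹ *ᵥ (Xᵀ *ᵥ (X *ᵥ β + e))) 1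
        < ((Xᵀ * X + s • diagonal d)⁻¹ *ᵥ (Xᵀ *ᵥ (X *ᵥ β + e))) 0
      ↔ s * ((1 + d 0) * β 1 - (1 + d 1) * β 0) < X *ᵥ ![1 + d 1, -(1 + d 0)] ⬝ᵥ e := by
  have hd' : ∀ i, 1 + d i ≠ 0 := fun i => (hd i).ne'
  rw [ridge_estimate_apply hX hs.ne' hd', ridge_estimate_apply hX hs.ne' hd',
    div_lt_div_iff₀ (mul_pos hs (hd 1)) (mul_pos hs (hd 0)), ← transpose_mulVec_dotProduct]
  simp only [dotProduct, Fin.sum_univ_two, Matrix.cons_val_zero, Matrix.cons_val_one]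
  constructor <;> intro h <;> nlinarith

/-- **Theorem 1, Eq. (3), exact Gaussian form.**
In the fixed-design model `y = Xβ + e` with orthonormal design `XᵀX = n·I₂`
and noise `e ~ ⨂ⁿ N(0,γ²)`, the causality accuracy of the causally
regularized estimate `β̂_{C,λ} = (XᵀX + nλ·diag(ε, 1−ε))⁻¹ Xᵀ y` is
`C(β̂_{C,λ}) = Φ((√n/γ)·((1+λ(1−ε))β₁ − (1+λε)β₂)/√((1+λε)² + (1+λ(1−ε))²))`. -/
theorem causal_regularizer_causality_accuracy
    (n : ℕ) (hn : 1 ≤ n)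
    (X : Matrix (Fin n) (Fin 2) ℝ)
    (hX : Xᵀ * X = (n : ℝ) • (1 : Matrix (Fin 2) (Fin 2) ℝ))
    (β : Fin 2 → ℝ) (γ : ℝ) (hγ : 0 < γ)
    (ε : ℝ) (hε : ε ∈ Set.Icc (0 : ℝ) 1)
    (lam : ℝ) (hlam : 0 ≤ lam) :
    let μnoise : Measure (Fin n → ℝ) :=
      Measure.pi fun _ : Fin n => gaussianReal 0 (Real.toNNReal (γ ^ 2))
    let DC : Matrix (Fin 2) (Fin 2) ℝ := Matrix.diagonal ![ε, 1 - ε]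
    let βC : (Fin n → ℝ) → (Fin 2 → ℝ) := fun e =>
      (Xᵀ * X + (n : ℝ) • lam • DC)⁻¹ *ᵥ (Xᵀ *ᵥ (X *ᵥ β + e))
    (μnoise {e | βC e 0 > βC e 1}).toReal
      = stdGaussianCDF ((Real.sqrt n / γ) *
          (((1 + lam * (1 - ε)) * β 0 - (1 + lam * ε) * β 1) /
            Real.sqrt ((1 + lam * ε) ^ 2 + (1 + lam * (1 - ε)) ^ 2))) := by
  intro μnoise DC βC
  obtain ⟨hε0, hε1⟩ := hε
  have hn' : (0 : ℝ) < n := by exact_mod_cast hn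
  set a := 1 + lam * ε
  set b := 1 + lam * (1 - ε)
  have ha : 0 < a := by positivity
  have hb : 0 < b := by nlinarith
  have hpenalty : lam • DC = diagonal ![lam * ε, lam * (1 - ε)] := by
    simp [DC, ← diagonal_smul]
  have hevent : {e | βC e 0 > βC e 1} = {e | n * (a * β 1 - b * β 0) < X *ᵥ ![b, -a] ⬝ᵥ e} := by
    ext e
    simp only [Set.mem_ofPred_eq, gt_iff_lt, βC, hpenalty]
    exact ridge_estimate_one_lt_zero_iff hX hn' (d := ![lam * ε, lam * (1 - ε)])
        (Fin.forall_fin_two.2 ⟨ha, hb⟩) β e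
  have hnorm : X *ᵥ ![b, -a] ⬝ᵥ X *ᵥ ![b, -a] = n * (a ^ 2 + b ^ 2) := by
    rw [mulVec_dotProduct_mulVec_self hX]
    simp only [dotProduct, Fin.sum_univ_two, Matrix.cons_val_zero, Matrix.cons_val_one]
    ring
  have hc : X *ᵥ ![b, -a] ≠ 0 := by
    refine dotProduct_self_eq_zero.not.1 ?_
    rw [hnorm]
    positivity
  have hv : (γ ^ 2).toNNReal ≠ 0 := by positivity
  rw [hevent, measure_lt_dotProduct_pi_gaussianReal hv hc, hnorm,
    Real.coe_toNNReal _ (sq_nonneg γ), Real.sqrt_sq hγ.le, Real.sqrt_mul hn'.le]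
  congr 1
  field_simp
  rw [Real.sq_sqrt hn'.le]
  ring
end

section
/- Consider the fixed-design linear model y = Xβ + e with X ∈ ℝ^{n×2}, orthonormal design XᵀX = n·I₂, β = (β₁,β₂), and noise e ∈ ℝⁿ with law ⨂ⁿ N(0, γ²), γ > 0. Fix λ ≥ 0 and let β̂_{R,λ} = (XᵀX + nλI₂)⁻¹Xᵀy be the ridge (L₂-regularized) estimate. Then the causality accuracy C(β̂_{R,λ}) = P[(β̂_{R,λ})₁ > (β̂_{R,λ})₂] satisfies C(β̂_{R,λ}) = Φ( (√n/γ) · (β₁ − β₂)/√2 ), independently of λ, where Φ is the standard Gaussian CDF and the probability is taken over the noise measure ⨂ⁿ N(0, γ²). -/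
/-!
Under the orthonormal design `XᵀX = n • 1` the ridge estimate is
`(n(1 + λ))⁻¹ • (n • β + Xᵀe)`, a positive multiple of the least-squares estimate, which is why
`λ` drops out. Hence `β̂₁ > β̂₂` is the half-space `⟪X (-1, 1), e⟫ < n (β₁ - β₂)`. A linear form
`⟪a, e⟫` of i.i.d. `N(0, γ²)` noise is `N(0, ‖a‖² γ²)` (compare characteristic functions), and
`‖X (-1, 1)‖² = 2n` by orthonormality, so the probability is
`Φ(n (β₁ - β₂) / (√(2n) γ))`.
-/

open MeasureTheory ProbabilityTheory Matrix Finset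

open scoped NNReal

lemma map_pi_gaussianReal_dotProduct {ι : Type*} [Fintype ι] (v : ℝ≥0) (a : ι → ℝ) :
    (Measure.pi fun _ : ι => gaussianReal 0 v).map (a ⬝ᵥ ·)
      = gaussianReal 0 ((∑ i, a i ^ 2).toNNReal * v) := by
  have hsplit : (a ⬝ᵥ ·) = (fun p : ι → ℝ => ∑ i, p i) ∘ (fun e i => a i * e i) := rfl
  rw [hsplit, ← Measure.map_map (by fun_prop) (by fun_prop),
    Measure.pi_map_pi (fun _ => by fun_prop)]
  simp_rw [gaussianReal_map_const_mul, mul_zero]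
  refine Measure.ext_of_charFun ?_
  ext t
  rw [charFun_map_sum_pi_eq_prod, Finset.prod_apply]
  simp_rw [charFun_gaussianReal, ← Complex.exp_sum]
  congr 1
  push_cast [Real.coe_toNNReal _ (Finset.sum_nonneg fun i _ => sq_nonneg (a i))]
  simp only [mul_zero, zero_mul, zero_sub, sum_neg_distrib, sum_mul, sum_div]

lemma toReal_gaussianReal_Iio_mul {σ : ℝ} (hσ : 0 < σ) (t : ℝ) :
    (gaussianReal 0 (σ ^ 2).toNNReal (Set.Iio (σ * t))).toReal = stdGaussianCDF t := by
  have hmap : (gaussianReal 0 1).map (σ * ·) = gaussianReal 0 (σ ^ 2).toNNReal := by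
    rw [gaussianReal_map_const_mul, mul_zero, mul_one]
    congr 1
    ext
    simp [sq_nonneg]
  have hpre : (σ * ·) ⁻¹' Set.Iio (σ * t) = Set.Iio t := by
    ext x
    simp [mul_lt_mul_iff_right₀ hσ]
  rw [← hmap, Measure.map_apply (by fun_prop) measurableSet_Iio, hpre, stdGaussianCDF,
    measure_congr (Iio_ae_eq_Iic' (gaussianReal_absolutelyContinuous 0 one_ne_zero
      Real.volume_singleton))]

section Ridge
variable {m k : Type*} [Fintype m] [Fintype k] [DecidableEq k] {X : Matrix m k ℝ} {c : ℝ}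

lemma ridge_eq_of_transpose_mul_self (hX : Xᵀ * X = c • 1) (d : ℝ) (β : k → ℝ) (e : m → ℝ) :
    (Xᵀ * X + d • 1)⁻¹ *ᵥ (Xᵀ *ᵥ (X *ᵥ β + e)) = (c + d)⁻¹ • (c • β + Xᵀ *ᵥ e) := by
  have hinv : ((c + d) • (1 : Matrix k k ℝ))⁻¹ = (c + d)⁻¹ • 1 := by
    rcases eq_or_ne (c + d) 0 with h | h
    · simp [h]
    · exact inv_eq_left_inv (by rw [smul_mul_smul_comm, inv_mul_cancel₀ h, mul_one, one_smul])
  rw [hX, ← add_smul, hinv, mulVec_add, mulVec_mulVec, hX]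
  simp only [smul_mulVec, one_mulVec, smul_add]

lemma sum_mulVec_sq_of_transpose_mul_self (hX : Xᵀ * X = c • 1) (w : k → ℝ) :
    ∑ i, (X *ᵥ w) i ^ 2 = c * ∑ j, w j ^ 2 := by
  simp only [sq]
  rw [← dotProduct, dotProduct_mulVec, ← vecMul_transpose, vecMul_vecMul, hX, vecMul_smul,
    vecMul_one, smul_dotProduct, smul_eq_mul, dotProduct]

end Ridge

/-- **Theorem 1, Eq. (4), exact Gaussian form.**
In the fixed-design model `y = Xβ + e` with orthonormal design `XᵀX = n·I₂`
and noise `e ~ ⨂ⁿ N(0,γ²)`, the causality accuracy of the ridge estimate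
`β̂_{R,λ} = (XᵀX + nλI₂)⁻¹ Xᵀ y` is
`C(β̂_{R,λ}) = Φ((√n/γ)·(β₁ − β₂)/√2)`, independently of `λ`. -/
theorem ridge_causality_accuracy
    (n : ℕ) (hn : 1 ≤ n)
    (X : Matrix (Fin n) (Fin 2) ℝ)
    (hX : Xᵀ * X = (n : ℝ) • (1 : Matrix (Fin 2) (Fin 2) ℝ))
    (β : Fin 2 → ℝ) (γ : ℝ) (hγ : 0 < γ)
    (lam : ℝ) (hlam : 0 ≤ lam) :
    let μnoise : Measure (Fin n → ℝ) :=
      Measure.pi fun _ : Fin n => gaussianReal 0 (Real.toNNReal (γ ^ 2))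
    let βR : (Fin n → ℝ) → (Fin 2 → ℝ) := fun e =>
      (Xᵀ * X + (n : ℝ) • lam • (1 : Matrix (Fin 2) (Fin 2) ℝ))⁻¹ *ᵥ
        (Xᵀ *ᵥ (X *ᵥ β + e))
    (μnoise {e | βR e 0 > βR e 1}).toReal
      = stdGaussianCDF ((Real.sqrt n / γ) * ((β 0 - β 1) / Real.sqrt 2)) := by
  intro μnoise βR
  have hn₀ : (0 : ℝ) < n := by exact_mod_cast hn
  set a := X *ᵥ ![-1, 1]
  have hevent : {e | βR e 0 > βR e 1} = (a ⬝ᵥ ·) ⁻¹' Set.Iio (n * (β 0 - β 1)) := by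
    ext e
    have hshrink : (0 : ℝ) < (n + n * lam)⁻¹ := by positivity
    simp only [βR, smul_smul, ridge_eq_of_transpose_mul_self hX, Set.mem_ofPred_eq,
      Set.mem_preimage, Set.mem_Iio, Pi.smul_apply, Pi.add_apply, smul_eq_mul, gt_iff_lt,
      mul_lt_mul_iff_right₀ hshrink, a, dotProduct_comm _ e, dotProduct_mulVec,
      ← mulVec_transpose]
    simp only [dotProduct, Fin.sum_univ_two, cons_val_zero, cons_val_one, cons_val_fin_one,
      mul_neg, mul_one, neg_add_lt_iff_lt_add]
    constructor <;> intro h <;> linarith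
  have hvar : ∑ i, a i ^ 2 = 2 * n := by
    rw [sum_mulVec_sq_of_transpose_mul_self hX]
    norm_num [Fin.sum_univ_two, mul_comm]
  set σ := √2 * √n * γ
  have hσ : 0 < σ := by positivity
  have hσsq : (∑ i, a i ^ 2).toNNReal * (γ ^ 2).toNNReal = (σ ^ 2).toNNReal := by
    rw [← Real.toNNReal_mul (by positivity), hvar, mul_pow, mul_pow, Real.sq_sqrt zero_le_two,
      Real.sq_sqrt hn₀.le]
  have hthreshold : n * (β 0 - β 1) = σ * ((√n / γ) * ((β 0 - β 1) / √2)) := by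
    simp only [σ]
    field_simp
    linear_combination (-(β 0 - β 1)) * Real.mul_self_sqrt hn₀.le
  rw [hevent, ← Measure.map_apply (by fun_prop) measurableSet_Iio, map_pi_gaussianReal_dotProduct,
    hσsq, hthreshold, toReal_gaussianReal_Iio_mul hσ]
end

section
/- Fix β₁, β₂ ≥ 0 with β₁ + β₂ > 0 and ε ∈ [0, 1/2). Then the function λ ↦ ((1+λ(1−ε))β₁ − (1+λε)β₂) / √((1+λε)² + (1+λ(1−ε))²) is strictly increasing on [0, ∞). Consequently, under the fixed-design Gaussian model with orthonormal design, the causality accuracy C(β̂_{C,λ}) = Φ((√n/γ) · ((1+λ(1−ε))β₁ − (1+λε)β₂)/√((1+λε)² + (1+λ(1−ε))²)) is a strictly increasing function of the penalization parameter λ ≥ 0 whenever the causality detector is better than random (ε < 1/2). -/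
/-!
With `a = 1 + λε` and `b = 1 + λ(1-ε)`, the quantity equals `β₁ cos θ - β₂ sin θ`, where
`θ = arctan (a / b) ∈ [0, π/2)` is the polar angle of `(b, a)`. Since `ε < 1/2`, the ratio `a / b`,
hence `θ`, strictly decreases in `λ`; on `[0, π/2]` the cosine decreases and the sine increases, so
with nonnegative weights, not both zero, `β₁ cos θ - β₂ sin θ` strictly decreases in `θ`.
Composing with `t ↦ Φ(√n/γ · t)` keeps strict monotonicity because `Φ` is strictly increasing.
-/

open MeasureTheory ProbabilityTheory

open Real Set

theorem stdGaussianCDF_strictMono : StrictMono stdGaussianCDF := by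
  intro t u htu
  have hIoc : gaussianReal 0 1 (Ioc t u) ≠ 0 := fun h => by
    simpa [htu.not_ge] using gaussianReal_absolutelyContinuous' 0 one_ne_zero h
  have hlt : gaussianReal 0 1 (Iic t) < gaussianReal 0 1 (Iic u) := by
    rw [← Iic_union_Ioc_eq_Iic htu.le, measure_union (Iic_disjoint_Ioc le_rfl) measurableSet_Ioc]
    exact ENNReal.lt_add_right (measure_ne_top _ _) hIoc
  exact ENNReal.toReal_strict_mono (measure_ne_top _ _) hlt

theorem strictAntiOn_one_add_mul_div_one_add_mul {c d : ℝ} (hcd : c < d) (hd : 0 ≤ d) :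
    StrictAntiOn (fun x => (1 + x * c) / (1 + x * d)) (Ici 0) := by
  intro x hx y hy hxy
  rw [mem_Ici] at hx hy
  rw [div_lt_div_iff₀ (by positivity) (by positivity)]
  nlinarith [mul_pos (sub_pos.2 hxy) (sub_pos.2 hcd)]

theorem strictAntiOn_mul_cos_sub_mul_sin {β₁ β₂ : ℝ} (hβ₁ : 0 ≤ β₁) (hβ₂ : 0 ≤ β₂)
    (hβ : 0 < β₁ + β₂) : StrictAntiOn (fun θ => β₁ * cos θ - β₂ * sin θ) (Icc 0 (π / 2)) := by
  intro x hx y hy hxy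
  have hcos : cos y < cos x :=
    strictAntiOn_cos ⟨hx.1, hx.2.trans (by linarith [pi_pos])⟩
      ⟨hy.1, hy.2.trans (by linarith [pi_pos])⟩ hxy
  have hsin : sin x < sin y :=
    strictMonoOn_sin ⟨by linarith [pi_pos, hx.1], hx.2⟩ ⟨by linarith [pi_pos, hy.1], hy.2⟩ hxy
  show β₁ * cos y - β₂ * sin y < β₁ * cos x - β₂ * sin x
  rcases hβ₁.eq_or_lt with rfl | hβ₁
  · nlinarith [mul_pos (by linarith : 0 < β₂) (sub_pos.2 hsin)]
  · nlinarith [mul_pos hβ₁ (sub_pos.2 hcos), mul_nonneg hβ₂ (sub_pos.2 hsin).le]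

theorem mul_cos_arctan_div_sub_mul_sin_arctan_div (β₁ β₂ : ℝ) {a b : ℝ} (hb : 0 < b) :
    β₁ * cos (arctan (a / b)) - β₂ * sin (arctan (a / b)) =
      (b * β₁ - a * β₂) / √(a ^ 2 + b ^ 2) := by
  have hsqrt : √(a ^ 2 + b ^ 2) = b * √(1 + (a / b) ^ 2) :=
    calc √(a ^ 2 + b ^ 2) = √(b ^ 2 * (1 + (a / b) ^ 2)) := by field_simp; ring_nf
      _ = b * √(1 + (a / b) ^ 2) := by rw [sqrt_mul (sq_nonneg b), sqrt_sq hb.le]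
  rw [cos_arctan, sin_arctan, hsqrt]
  field_simp

/-- For `β₁, β₂ ≥ 0` with `β₁ + β₂ > 0` and detector error
`ε ∈ [0, 1/2)`, the map
`λ ↦ ((1+λ(1−ε))β₁ − (1+λε)β₂)/√((1+λε)² + (1+λ(1−ε))²)` is strictly
increasing on `[0,∞)`; consequently, so is the causality accuracy
`λ ↦ Φ((√n/γ)·(that quantity))`. -/
theorem causality_accuracy_strictMonoOn
    (n : ℕ) (hn : 1 ≤ n) (γ : ℝ) (hγ : 0 < γ)
    (β₁ β₂ : ℝ) (hβ₁ : 0 ≤ β₁) (hβ₂ : 0 ≤ β₂) (hβ : 0 < β₁ + β₂)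
    (ε : ℝ) (hε : ε ∈ Set.Ico (0 : ℝ) (1 / 2)) :
    let f : ℝ → ℝ := fun lam =>
      ((1 + lam * (1 - ε)) * β₁ - (1 + lam * ε) * β₂) /
        Real.sqrt ((1 + lam * ε) ^ 2 + (1 + lam * (1 - ε)) ^ 2)
    StrictMonoOn f (Set.Ici (0 : ℝ))
    ∧ StrictMonoOn (fun lam => stdGaussianCDF ((Real.sqrt n / γ) * f lam))
        (Set.Ici (0 : ℝ)) := by
  obtain ⟨hε₀, hε₁⟩ := hε
  intro f
  have hb : ∀ lam ∈ Ici (0 : ℝ), 0 < 1 + lam * (1 - ε) := fun lam hlam => by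
    nlinarith [mem_Ici.1 hlam]
  set angle := fun lam : ℝ => arctan ((1 + lam * ε) / (1 + lam * (1 - ε)))
  have angle_anti : StrictAntiOn angle (Ici 0) :=
    arctan_strictMono.comp_strictAntiOn
      (strictAntiOn_one_add_mul_div_one_add_mul (by linarith) (by linarith))
  have angle_mem : MapsTo angle (Ici 0) (Icc 0 (π / 2)) := fun lam hlam =>
    ⟨arctan_nonneg.2 (div_nonneg (by nlinarith [mem_Ici.1 hlam]) (hb lam hlam).le),
      (arctan_lt_pi_div_two _).le⟩
  have hf : StrictMonoOn f (Ici 0) :=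
    ((strictAntiOn_mul_cos_sub_mul_sin hβ₁ hβ₂ hβ).comp angle_anti angle_mem).congr
      fun lam hlam => mul_cos_arctan_div_sub_mul_sin_arctan_div β₁ β₂ (hb lam hlam)
  have hscale : 0 < √n / γ := by positivity
  exact ⟨hf,
    (stdGaussianCDF_strictMono.comp (strictMono_mul_left_of_pos hscale)).comp_strictMonoOn hf⟩
end

section
/- Fix β₁, β₂ ≥ 0, λ ≥ 0, and ε ∈ [0, 1/2]. Then ((1+λ(1−ε))β₁ − (1+λε)β₂) / √((1+λε)² + (1+λ(1−ε))²) ≥ (β₁ − β₂)/√2. Consequently, under the fixed-design Gaussian model with orthonormal design, whenever the causality detector is at least as good as random (ε ≤ 1/2) and the true coefficients are nonnegative, causal regularization never decreases causality accuracy relative to ridge regularization: C(β̂_{C,λ}) ≥ C(β̂_{R,λ}). -/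
open MeasureTheory ProbabilityTheory

lemma stdGaussianCDF_mono {s t : ℝ} (h : s ≤ t) :
    stdGaussianCDF s ≤ stdGaussianCDF t :=
  ENNReal.toReal_mono (measure_ne_top _ _)
    (measure_mono (Set.Iic_subset_Iic.2 h))

/-- For `β₁, β₂ ≥ 0`, `λ ≥ 0` and detector error
`ε ∈ [0, 1/2]`, we have
`((1+λ(1−ε))β₁ − (1+λε)β₂)/√((1+λε)² + (1+λ(1−ε))²) ≥ (β₁ − β₂)/√2`;
consequently causal regularization never decreases causality accuracy
relative to ridge: `C(β̂_{C,λ}) ≥ C(β̂_{R,λ})`. -/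
theorem causal_regularizer_accuracy_ge_ridge
    (n : ℕ) (hn : 1 ≤ n) (γ : ℝ) (hγ : 0 < γ)
    (β₁ β₂ : ℝ) (hβ₁ : 0 ≤ β₁) (hβ₂ : 0 ≤ β₂)
    (lam : ℝ) (hlam : 0 ≤ lam)
    (ε : ℝ) (hε : ε ∈ Set.Icc (0 : ℝ) (1 / 2)) :
    ((1 + lam * (1 - ε)) * β₁ - (1 + lam * ε) * β₂) /
        Real.sqrt ((1 + lam * ε) ^ 2 + (1 + lam * (1 - ε)) ^ 2)
      ≥ (β₁ - β₂) / Real.sqrt 2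
    ∧ stdGaussianCDF ((Real.sqrt n / γ) *
        (((1 + lam * (1 - ε)) * β₁ - (1 + lam * ε) * β₂) /
          Real.sqrt ((1 + lam * ε) ^ 2 + (1 + lam * (1 - ε)) ^ 2)))
      ≥ stdGaussianCDF ((Real.sqrt n / γ) * ((β₁ - β₂) / Real.sqrt 2)) := by
  obtain ⟨hε0, hε2⟩ := hε
  set a : ℝ := 1 + lam * ε with ha_def
  set b : ℝ := 1 + lam * (1 - ε) with hb_def
  have ha : 0 < a := by positivity
  have hab : a ≤ b := by
    have : lam * ε ≤ lam * (1 - ε) := by nlinarith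
    simpa [ha_def, hb_def] using this
  have hb : 0 < b := lt_of_lt_of_le ha hab
  set s : ℝ := Real.sqrt (a ^ 2 + b ^ 2) with hs_def
  have hs : 0 < s := Real.sqrt_pos.2 (by positivity)
  have h2 : (0 : ℝ) < Real.sqrt 2 := Real.sqrt_pos.2 (by norm_num)
  have hsb : s ≤ Real.sqrt 2 * b := by
    have h1 : a ^ 2 + b ^ 2 ≤ 2 * b ^ 2 := by nlinarith
    calc s ≤ Real.sqrt (2 * b ^ 2) := Real.sqrt_le_sqrt h1
      _ = Real.sqrt 2 * b := by
          rw [Real.sqrt_mul (by norm_num), Real.sqrt_sq hb.le]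
  have hsa : Real.sqrt 2 * a ≤ s := by
    have h1 : 2 * a ^ 2 ≤ a ^ 2 + b ^ 2 := by nlinarith
    calc Real.sqrt 2 * a = Real.sqrt (2 * a ^ 2) := by
          rw [Real.sqrt_mul (by norm_num), Real.sqrt_sq ha.le]
      _ ≤ s := Real.sqrt_le_sqrt h1
  have hbs : 1 / Real.sqrt 2 ≤ b / s := by
    rw [div_le_div_iff₀ h2 hs]; linarith
  have has : a / s ≤ 1 / Real.sqrt 2 := by
    rw [div_le_div_iff₀ hs h2]; linarith
  have key : (β₁ - β₂) / Real.sqrt 2 ≤ (b * β₁ - a * β₂) / s := by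
    calc (β₁ - β₂) / Real.sqrt 2 = β₁ * (1 / Real.sqrt 2) - β₂ * (1 / Real.sqrt 2) := by
          ring
      _ ≤ β₁ * (b / s) - β₂ * (a / s) :=
          sub_le_sub (mul_le_mul_of_nonneg_left hbs hβ₁)
            (mul_le_mul_of_nonneg_left has hβ₂)
      _ = (b * β₁ - a * β₂) / s := by ring
  refine ⟨key, ?_⟩
  exact stdGaussianCDF_mono
    (mul_le_mul_of_nonneg_left key (by positivity))
end
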